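/- Let y : [0, ∞) → ℝ be a C² solution of the Laplace–Young equation C·y = A·y''/(1 + (y')²)^{3/2} with A, C > 0. If y is monotone and y' is monotone (so both have limits at infinity) and y is bounded, then y(x) → 0 as x → ∞. -/

import Mathlib

/-!
Being monotone and bounded, `y` has a limit `L`. Since `(1 + y'²)^{3/2} ≥ 1`, the equation makes
`y''` at least `(C/A) y` wherever `y ≥ 0`. So if `L > 0`, then `y''` is eventually bounded below by
a positive constant, which forces `y'` and then `y` to `+∞`, a contradiction. The equation is odd
in `y`, so the same argument applied to `-y` excludes `L < 0`.
-/

open Filter Topology Set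

theorem MonotoneOn.exists_tendsto_atTop_of_bddAbove {α β : Type*} [Preorder α]
    [IsDirectedOrder α] [ConditionallyCompleteLinearOrder β] [TopologicalSpace β]
    [OrderTopology β] {f : α → β} {a : α} (hf : MonotoneOn f (Ici a))
    (hbdd : BddAbove (f '' Ici a)) : ∃ L, Tendsto f atTop (𝓝 L) := by
  have hmono : Monotone fun x : Ici a => f x := fun x x' hxx' => hf x.2 x'.2 hxx'
  have hbdd' : BddAbove (range fun x : Ici a => f x) := by rwa [← image_eq_range]
  exact ⟨_, (tendsto_comp_val_Ici_atTop (f := f)).1 (tendsto_atTop_ciSup hmono hbdd')⟩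

theorem AntitoneOn.exists_tendsto_atTop_of_bddBelow {α β : Type*} [Preorder α]
    [IsDirectedOrder α] [ConditionallyCompleteLinearOrder β] [TopologicalSpace β]
    [OrderTopology β] {f : α → β} {a : α} (hf : AntitoneOn f (Ici a))
    (hbdd : BddBelow (f '' Ici a)) : ∃ L, Tendsto f atTop (𝓝 L) :=
  MonotoneOn.exists_tendsto_atTop_of_bddAbove (β := βᵒᵈ) hf.dual_right hbdd

theorem tendsto_atTop_of_eventually_le_deriv {f : ℝ → ℝ} (hf : Differentiable ℝ f) {ε : ℝ}
    (hε : 0 < ε) (h : ∀ᶠ x in atTop, ε ≤ deriv f x) : Tendsto f atTop atTop := by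
  obtain ⟨a, ha⟩ := eventually_atTop.mp h
  have hgrowth : ∀ x ∈ Ici a, ε * (x - a) ≤ f x - f a := fun x hx =>
    (convex_Ici a).mul_sub_le_image_sub_of_le_deriv hf.continuous.continuousOn
      hf.differentiableOn (fun z hz => ha z (interior_subset hz)) a self_mem_Ici x hx hx
  have hlinear : Tendsto (fun x => f a + ε * (x - a)) atTop atTop :=
    tendsto_atTop_add_const_left _ _
      ((tendsto_atTop_add_const_right _ _ tendsto_id).const_mul_atTop hε)
  refine tendsto_atTop_mono' _ ?_ hlinear
  filter_upwards [Ici_mem_atTop a] with x hx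
  linarith [hgrowth x hx]

theorem tendsto_atTop_of_eventually_le_deriv_deriv {f : ℝ → ℝ} (hf : Differentiable ℝ f)
    (hf' : Differentiable ℝ (deriv f)) {ε : ℝ} (hε : 0 < ε)
    (h : ∀ᶠ x in atTop, ε ≤ deriv (deriv f) x) : Tendsto f atTop atTop :=
  tendsto_atTop_of_eventually_le_deriv hf one_pos
    ((tendsto_atTop_of_eventually_le_deriv hf' hε h).eventually_ge_atTop 1)

theorem nonpos_of_tendsto_of_mul_le_deriv_deriv {y : ℝ → ℝ} (hy : Differentiable ℝ y)
    (hy' : Differentiable ℝ (deriv y)) {κ L : ℝ} (hκ : 0 < κ)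
    (h : ∀ᶠ x in atTop, 0 ≤ y x → κ * y x ≤ deriv (deriv y) x)
    (hL : Tendsto y atTop (𝓝 L)) : L ≤ 0 := by
  by_contra! hL_pos
  have hy'' : ∀ᶠ x in atTop, κ * (L / 2) ≤ deriv (deriv y) x := by
    filter_upwards [h, hL.eventually (eventually_ge_nhds (half_lt_self hL_pos))] with x hx hyx
    exact (mul_le_mul_of_nonneg_left hyx hκ.le).trans (hx (by linarith))
  exact not_tendsto_nhds_of_tendsto_atTop
    (tendsto_atTop_of_eventually_le_deriv_deriv hy hy' (by positivity) hy'') L hL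

def IsLaplaceYoungAt (A C : ℝ) (y : ℝ → ℝ) (x : ℝ) : Prop :=
  C * y x = A * deriv (deriv y) x / (1 + deriv y x ^ 2) ^ ((3 : ℝ) / 2)

namespace IsLaplaceYoungAt

variable {A C : ℝ} {y : ℝ → ℝ} {x : ℝ}

theorem neg (h : IsLaplaceYoungAt A C y x) : IsLaplaceYoungAt A C (-y) x := by
  unfold IsLaplaceYoungAt at h ⊢
  rw [deriv.neg', deriv.fun_neg, Pi.neg_apply, neg_sq, mul_neg, h, mul_neg, neg_div]

theorem mul_le_deriv_deriv (hA : 0 < A) (hC : 0 < C) (h : IsLaplaceYoungAt A C y x)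
    (hyx : 0 ≤ y x) : C / A * y x ≤ deriv (deriv y) x := by
  set D := (1 + deriv y x ^ 2) ^ ((3 : ℝ) / 2)
  have hD : 1 ≤ D := Real.one_le_rpow (le_add_of_nonneg_right (sq_nonneg _)) (by norm_num)
  have hy'' : deriv (deriv y) x = C / A * y x * D := by
    unfold IsLaplaceYoungAt at h
    field_simp at h ⊢
    linarith
  rw [hy'']
  exact le_mul_of_one_le_right (by positivity) hD

end IsLaplaceYoungAt

theorem stmt9_general (A C : ℝ) (hA : 0 < A) (hC : 0 < C) (y : ℝ → ℝ)
    (hy : ContDiff ℝ 2 y)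
    (hODE : ∀ x ∈ Set.Ici (0:ℝ),
      C * y x = A * deriv (deriv y) x / (1 + (deriv y x) ^ 2) ^ ((3:ℝ)/2))
    (hmono : MonotoneOn y (Set.Ici 0) ∨ AntitoneOn y (Set.Ici 0))
    (hbdd : ∃ M : ℝ, ∀ x ∈ Set.Ici (0:ℝ), |y x| ≤ M) :
    Tendsto y atTop (nhds 0) := by
  obtain ⟨M, hM⟩ := hbdd
  obtain ⟨L, hL⟩ : ∃ L, Tendsto y atTop (𝓝 L) := by
    rcases hmono with hmono | hanti
    · exact hmono.exists_tendsto_atTop_of_bddAbove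
        ⟨M, forall_mem_image.2 fun x hx => (abs_le.1 (hM x hx)).2⟩
    · exact hanti.exists_tendsto_atTop_of_bddBelow
        ⟨-M, forall_mem_image.2 fun x hx => (abs_le.1 (hM x hx)).1⟩
  have hy₁ : Differentiable ℝ y := hy.differentiable two_ne_zero
  have hy₂ : Differentiable ℝ (deriv y) := hy.differentiable_deriv_two
  have hLY : ∀ᶠ x in atTop, IsLaplaceYoungAt A C y x := mem_of_superset (Ici_mem_atTop 0) hODE
  have hL_nonpos : L ≤ 0 :=
    nonpos_of_tendsto_of_mul_le_deriv_deriv hy₁ hy₂ (by positivity)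
      (hLY.mono fun x hx => hx.mul_le_deriv_deriv hA hC) hL
  have hL_nonneg : -L ≤ 0 :=
    nonpos_of_tendsto_of_mul_le_deriv_deriv hy₁.neg (by rw [deriv.neg']; exact hy₂.neg)
      (by positivity) (hLY.mono fun x hx => hx.neg.mul_le_deriv_deriv hA hC) hL.neg
  rwa [le_antisymm hL_nonpos (neg_nonpos.1 hL_nonneg)] at hL

/-- A bounded `C²` solution of the Laplace–Young equation on `[0,∞)` which is
monotone with monotone derivative tends to `0` at infinity. -/
theorem stmt9 (A C : ℝ) (hA : 0 < A) (hC : 0 < C) (y : ℝ → ℝ)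
    (hy : ContDiff ℝ 2 y)
    (hODE : ∀ x ∈ Set.Ici (0:ℝ),
      C * y x = A * deriv (deriv y) x / (1 + (deriv y x) ^ 2) ^ ((3:ℝ)/2))
    (hmono : MonotoneOn y (Set.Ici 0) ∨ AntitoneOn y (Set.Ici 0))
    (hmono' : MonotoneOn (deriv y) (Set.Ici 0) ∨ AntitoneOn (deriv y) (Set.Ici 0))
    (hbdd : ∃ M : ℝ, ∀ x ∈ Set.Ici (0:ℝ), |y x| ≤ M) :
    Tendsto y atTop (nhds 0) :=
  stmt9_general A C hA hC y hy hODE hmono hbdd
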